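/- arXiv:2205.15292 — 2 statements merged into one kernel-verified Lean document; each statement's English description precedes it below -/
import Mathlib

section
/- Let S = (R_i)_{i∈I} be a family of fuzzy relations on U and X, X' fuzzy relations on U. Then for each k ∈ {1,2,3}: SD_k(S)(X) ⊓ (X ≈ X') = SD_k(S)(X') ⊓ (X ≈ X'). -/
open scoped symmDiff

/- L is a complete Heyting algebra (`Order.Frame`), regarded as a complete residuated
lattice with ⊗ = ⊓, residuum the Heyting implication ⇨, biresiduum ⇔ (`bihimp`),
and top element as the unit 1. -/
variable {L : Type*} [Order.Frame L] {U : Type*}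

/-- Composition of fuzzy relations: (R ∘ P)(u,v) = ⨆ w, R(u,w) ⊓ P(w,v). -/
def fcomp (R P : U → U → L) : U → U → L := fun u v => ⨆ w, R u w ⊓ P w v

/-- Inclusion degree of fuzzy relations: R ≲ Q. -/
def incl (R Q : U → U → L) : L := ⨅ u, ⨅ v, R u v ⇨ Q u v

/-- Equality degree of fuzzy relations: R ≈ Q. -/
def eqd (R Q : U → U → L) : L := ⨅ u, ⨅ v, R u v ⇔ Q u v

/-- SD_1(S)(X) = ⨅ i, ((X ∘ R_i) ≲ (R_i ∘ X)). -/
def SD1 {I : Type*} (S : I → U → U → L) (X : U → U → L) : L :=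
  ⨅ i, incl (fcomp X (S i)) (fcomp (S i) X)

/-- SD_2(S)(X) = ⨅ i, ((R_i ∘ X) ≲ (X ∘ R_i)). -/
def SD2 {I : Type*} (S : I → U → U → L) (X : U → U → L) : L :=
  ⨅ i, incl (fcomp (S i) X) (fcomp X (S i))

/-- SD_3(S)(X) = SD_1(S)(X) ⊓ SD_2(S)(X). -/
def SD3 {I : Type*} (S : I → U → U → L) (X : U → U → L) : L :=
  SD1 S X ⊓ SD2 S X


lemma eqd_comm (X X' : U → U → L) : eqd X X' = eqd X' X := by
  simp [eqd, bihimp_comm]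

lemma eqd_le (X X' : U → U → L) (u v : U) : eqd X X' ⊓ X u v ≤ X' u v := by
  have h : eqd X X' ≤ X u v ⇨ X' u v :=
    (iInf_le _ u).trans ((iInf_le _ v).trans (by rw [bihimp]; exact inf_le_right))
  exact le_himp_iff.mp h

lemma comp_left (X X' R : U → U → L) (u v : U) :
    eqd X X' ⊓ fcomp X R u v ≤ fcomp X' R u v := by
  rw [fcomp, fcomp, inf_iSup_eq]
  refine iSup_le fun w => ?_
  refine le_trans (le_of_eq (inf_assoc _ _ _).symm) (le_trans ?_ (le_iSup _ w))
  exact inf_le_inf_right _ (eqd_le X X' u w)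

lemma comp_right (X X' R : U → U → L) (u v : U) :
    eqd X X' ⊓ fcomp R X u v ≤ fcomp R X' u v := by
  rw [fcomp, fcomp, inf_iSup_eq]
  refine iSup_le fun w => ?_
  refine le_trans ?_ (le_iSup _ w)
  rw [inf_comm (R u w), ← inf_assoc, inf_comm _ (R u w)]
  exact inf_le_inf_left _ (eqd_le X X' w v)

lemma SD1_key {I : Type*} (S : I → U → U → L) (X X' : U → U → L) :
    eqd X X' ⊓ SD1 S X ≤ SD1 S X' := by
  refine le_iInf fun i => le_iInf fun u => le_iInf fun v => le_himp_iff.mpr ?_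
  set a := eqd X X' ⊓ SD1 S X ⊓ fcomp X' (S i) u v with ha
  have ha_e : a ≤ eqd X X' := inf_le_left.trans inf_le_left
  have ha_s : a ≤ SD1 S X := inf_le_left.trans inf_le_right
  have ha_c : a ≤ fcomp X' (S i) u v := inf_le_right
  have h1 : a ≤ fcomp X (S i) u v := by
    refine le_trans (le_inf ha_e ha_c) ?_
    rw [eqd_comm]; exact comp_left X' X (S i) u v
  have h2 : a ≤ fcomp (S i) X u v := by
    refine le_trans (le_inf ha_s h1) (le_himp_iff.mp ?_)
    exact (iInf_le _ i).trans ((iInf_le _ u).trans (iInf_le _ v))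
  exact le_trans (le_inf ha_e h2) (comp_right X X' (S i) u v)

lemma SD2_key {I : Type*} (S : I → U → U → L) (X X' : U → U → L) :
    eqd X X' ⊓ SD2 S X ≤ SD2 S X' := by
  refine le_iInf fun i => le_iInf fun u => le_iInf fun v => le_himp_iff.mpr ?_
  set a := eqd X X' ⊓ SD2 S X ⊓ fcomp (S i) X' u v with ha
  have ha_e : a ≤ eqd X X' := inf_le_left.trans inf_le_left
  have ha_s : a ≤ SD2 S X := inf_le_left.trans inf_le_right
  have ha_c : a ≤ fcomp (S i) X' u v := inf_le_right
  have h1 : a ≤ fcomp (S i) X u v := by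
    refine le_trans (le_inf ha_e ha_c) ?_
    rw [eqd_comm]; exact comp_right X' X (S i) u v
  have h2 : a ≤ fcomp X (S i) u v := by
    refine le_trans (le_inf ha_s h1) (le_himp_iff.mp ?_)
    exact (iInf_le _ i).trans ((iInf_le _ u).trans (iInf_le _ v))
  exact le_trans (le_inf ha_e h2) (comp_left X X' (S i) u v)

/-- For each k ∈ {1,2,3}: SD_k(S)(X) ⊓ (X ≈ X') = SD_k(S)(X') ⊓ (X ≈ X'). -/
theorem stmt5 [Nonempty U] {I : Type*} (S : I → U → U → L) (X X' : U → U → L) :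
    (SD1 S X ⊓ eqd X X' = SD1 S X' ⊓ eqd X X') ∧
    (SD2 S X ⊓ eqd X X' = SD2 S X' ⊓ eqd X X') ∧
    (SD3 S X ⊓ eqd X X' = SD3 S X' ⊓ eqd X X') := by
  have k1 : ∀ Y Y' : U → U → L, SD1 S Y ⊓ eqd Y Y' ≤ SD1 S Y' ⊓ eqd Y Y' := fun Y Y' =>
    le_inf (le_trans (le_of_eq (inf_comm _ _)) (SD1_key S Y Y')) inf_le_right
  have k2 : ∀ Y Y' : U → U → L, SD2 S Y ⊓ eqd Y Y' ≤ SD2 S Y' ⊓ eqd Y Y' := fun Y Y' =>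
    le_inf (le_trans (le_of_eq (inf_comm _ _)) (SD2_key S Y Y')) inf_le_right
  have e : eqd X' X = eqd X X' := eqd_comm X' X
  have h1 : SD1 S X ⊓ eqd X X' = SD1 S X' ⊓ eqd X X' :=
    le_antisymm (k1 X X') (by have := k1 X' X; rwa [e] at this)
  have h2 : SD2 S X ⊓ eqd X X' = SD2 S X' ⊓ eqd X X' :=
    le_antisymm (k2 X X') (by have := k2 X' X; rwa [e] at this)
  refine ⟨h1, h2, ?_⟩
  simp only [SD3]
  rw [inf_inf_distrib_right, h1, h2, ← inf_inf_distrib_right]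
end

section
/- Let S = (R_i)_{i∈I} and S' = (R'_i)_{i∈I} be two families of fuzzy relations on U indexed by the same set I, and let X be a fuzzy relation on U. Then for each k ∈ {1,2,3}: (S ≈ S') ⊓ SD_k(S)(X) = (S ≈ S') ⊓ SD_k(S')(X). -/
open scoped symmDiff

/- L is a complete Heyting algebra (`Order.Frame`), regarded as a complete residuated
lattice with ⊗ = ⊓, residuum the Heyting implication ⇨, biresiduum ⇔ (`bihimp`),
and top element as the unit 1. -/
variable {L : Type*} [Order.Frame L] {U : Type*}

/-- Degree of equality of two families of fuzzy relations: (S ≈ S') = ⨅ i, (R_i ≈ R'_i). -/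
def famEq {I : Type*} (S S' : I → U → U → L) : L := ⨅ i, eqd (S i) (S' i)

lemma famEq_inf_le {I : Type*} (S S' : I → U → U → L) (i : I) (u v : U) :
    famEq S S' ⊓ S i u v ≤ S' i u v := by
  rw [← le_himp_iff]
  calc famEq S S' ≤ eqd (S i) (S' i) := iInf_le _ i
    _ ≤ S i u v ⇔ S' i u v := le_trans (iInf_le _ u) (iInf_le _ v)
    _ ≤ S i u v ⇨ S' i u v := inf_le_right

lemma famEq_symm {I : Type*} (S S' : I → U → U → L) : famEq S S' = famEq S' S := by
  unfold famEq eqd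
  simp_rw [bihimp_comm]

lemma famEq_fcomp_left {I : Type*} (S S' : I → U → U → L) (X : U → U → L) (i : I) (u v : U) :
    famEq S S' ⊓ fcomp (S i) X u v ≤ fcomp (S' i) X u v := by
  unfold fcomp
  rw [inf_iSup_eq]
  refine iSup_le fun w => le_trans ?_ (le_iSup _ w)
  calc famEq S S' ⊓ (S i u w ⊓ X w v) ≤ (famEq S S' ⊓ S i u w) ⊓ X w v := by
        rw [inf_assoc]
    _ ≤ S' i u w ⊓ X w v := inf_le_inf_right _ (famEq_inf_le S S' i u w)

lemma famEq_fcomp_right {I : Type*} (S S' : I → U → U → L) (X : U → U → L) (i : I) (u v : U) :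
    famEq S S' ⊓ fcomp X (S i) u v ≤ fcomp X (S' i) u v := by
  unfold fcomp
  rw [inf_iSup_eq]
  refine iSup_le fun w => le_trans ?_ (le_iSup _ w)
  calc famEq S S' ⊓ (X u w ⊓ S i w v)
      = X u w ⊓ (famEq S S' ⊓ S i w v) := by rw [inf_left_comm]
    _ ≤ X u w ⊓ S' i w v := inf_le_inf_left _ (famEq_inf_le S S' i w v)

lemma SD1_le {I : Type*} (S S' : I → U → U → L) (X : U → U → L) :
    famEq S S' ⊓ SD1 S X ≤ SD1 S' X := by
  refine le_iInf fun i => le_iInf fun u => le_iInf fun v => le_himp_iff.2 ?_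
  set E := famEq S S'
  have hE : E = famEq S' S := famEq_symm S S'
  calc E ⊓ SD1 S X ⊓ fcomp X (S' i) u v
      ≤ E ⊓ (SD1 S X ⊓ (E ⊓ fcomp X (S' i) u v)) := by
        refine le_inf (le_trans inf_le_left inf_le_left) (le_inf (le_trans inf_le_left inf_le_right) (le_inf (le_trans inf_le_left inf_le_left) inf_le_right))
    _ ≤ E ⊓ (SD1 S X ⊓ fcomp X (S i) u v) := by
        refine inf_le_inf_left _ (inf_le_inf_left _ ?_)
        rw [hE]; exact famEq_fcomp_right S' S X i u v
    _ ≤ E ⊓ fcomp (S i) X u v := by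
        refine inf_le_inf_left _ ?_
        rw [← le_himp_iff]
        simp only [SD1, SD2, incl]
        exact le_trans (iInf_le _ i) (le_trans (iInf_le _ u) (iInf_le _ v))
    _ ≤ fcomp (S' i) X u v := famEq_fcomp_left S S' X i u v

lemma SD2_le {I : Type*} (S S' : I → U → U → L) (X : U → U → L) :
    famEq S S' ⊓ SD2 S X ≤ SD2 S' X := by
  refine le_iInf fun i => le_iInf fun u => le_iInf fun v => le_himp_iff.2 ?_
  set E := famEq S S'
  have hE : E = famEq S' S := famEq_symm S S'
  calc E ⊓ SD2 S X ⊓ fcomp (S' i) X u v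
      ≤ E ⊓ (SD2 S X ⊓ (E ⊓ fcomp (S' i) X u v)) := by
        refine le_inf (le_trans inf_le_left inf_le_left) (le_inf (le_trans inf_le_left inf_le_right) (le_inf (le_trans inf_le_left inf_le_left) inf_le_right))
    _ ≤ E ⊓ (SD2 S X ⊓ fcomp (S i) X u v) := by
        refine inf_le_inf_left _ (inf_le_inf_left _ ?_)
        rw [hE]; exact famEq_fcomp_left S' S X i u v
    _ ≤ E ⊓ fcomp X (S i) u v := by
        refine inf_le_inf_left _ ?_
        rw [← le_himp_iff]
        simp only [SD1, SD2, incl]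
        exact le_trans (iInf_le _ i) (le_trans (iInf_le _ u) (iInf_le _ v))
    _ ≤ fcomp X (S' i) u v := famEq_fcomp_right S S' X i u v

lemma eq_of_le {I : Type*} {F : (I → U → U → L) → L}
    (h : ∀ S S' : I → U → U → L, famEq S S' ⊓ F S ≤ F S') (S S' : I → U → U → L) :
    famEq S S' ⊓ F S = famEq S S' ⊓ F S' := by
  refine le_antisymm (le_inf inf_le_left (h S S')) (le_inf inf_le_left ?_)
  rw [famEq_symm]
  exact h S' S

/-- For each k ∈ {1,2,3}: (S ≈ S') ⊓ SD_k(S)(X) = (S ≈ S') ⊓ SD_k(S')(X). -/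
theorem stmt7 [Nonempty U] {I : Type*} (S S' : I → U → U → L) (X : U → U → L) :
    (famEq S S' ⊓ SD1 S X = famEq S S' ⊓ SD1 S' X) ∧
    (famEq S S' ⊓ SD2 S X = famEq S S' ⊓ SD2 S' X) ∧
    (famEq S S' ⊓ SD3 S X = famEq S S' ⊓ SD3 S' X) := by
  have h1 := eq_of_le (F := fun T => SD1 T X) (fun T T' => SD1_le T T' X) S S'
  have h2 := eq_of_le (F := fun T => SD2 T X) (fun T T' => SD2_le T T' X) S S'
  have h3 := eq_of_le (F := fun T => SD3 T X)
    (fun T T' => le_inf (le_trans (inf_le_inf_left _ inf_le_left) (SD1_le T T' X))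
      (le_trans (inf_le_inf_left _ inf_le_right) (SD2_le T T' X))) S S'
  exact ⟨h1, h2, h3⟩
end
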